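/- arXiv:1103.0484 — 6 statements merged into one kernel-verified Lean document; each statement's English description precedes it below -/
import Mathlib

section
/- For the Alamouti matrix X with rows x_S = (c₁, -conj(c₂)) and x_T = (c₂, conj(c₁)), if c₁, c₂ ∈ ℤ[i] are both nonzero, then det(x_Sᴴ x_S)·det(x_Tᴴ x_T) ≥ 1, where each row is viewed as a 1×2 matrix. -/
open Complex Matrix

theorem Matrix.det_row_mul_conjTranspose {n : Type*} [Fintype n] (x : Matrix (Fin 1) n ℂ) :
    (x * xᴴ).det = ((∑ i, normSq (x 0 i) : ℝ) : ℂ) := by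
  rw [det_fin_one, mul_apply]
  push_cast
  simp only [conjTranspose_apply, star_def, mul_conj]

theorem GaussianInt.one_le_normSq_of_ne_zero {c : GaussianInt} (hc : c ≠ 0) :
    1 ≤ normSq (c : ℂ) := by
  rw [← GaussianInt.intCast_real_norm]
  exact_mod_cast GaussianInt.norm_pos.2 hc

theorem alamouti_parallel_NVD_general (c₁ c₂ : GaussianInt) (h₁ : c₁ ≠ 0) :
    let xS : Matrix (Fin 1) (Fin 2) ℂ := !![(c₁ : ℂ), -(starRingEnd ℂ) (c₂ : ℂ)]
    let xT : Matrix (Fin 1) (Fin 2) ℂ := !![(c₂ : ℂ), (starRingEnd ℂ) (c₁ : ℂ)]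
    ((xS * xSᴴ).det * (xT * xTᴴ).det).im = 0 ∧
      1 ≤ ((xS * xSᴴ).det * (xT * xTᴴ).det).re := by
  intro xS xT
  set s := normSq (c₁ : ℂ) + normSq (c₂ : ℂ)
  have hS : (xS * xSᴴ).det = s := by
    rw [det_row_mul_conjTranspose]
    simp [xS, s, Fin.sum_univ_two]
  have hT : (xT * xTᴴ).det = s := by
    rw [det_row_mul_conjTranspose]
    simp [xT, s, Fin.sum_univ_two, add_comm]
  have hs : 1 ≤ s :=
    le_add_of_le_of_nonneg (GaussianInt.one_le_normSq_of_ne_zero h₁) (normSq_nonneg _)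
  rw [hS, hT, ← ofReal_mul, ofReal_im, ofReal_re]
  exact ⟨rfl, one_le_mul_of_one_le_of_one_le hs hs⟩

theorem alamouti_parallel_NVD (c₁ c₂ : GaussianInt) (h₁ : c₁ ≠ 0) (h₂ : c₂ ≠ 0) :
    let xS : Matrix (Fin 1) (Fin 2) ℂ := !![(c₁ : ℂ), -(starRingEnd ℂ) (c₂ : ℂ)]
    let xT : Matrix (Fin 1) (Fin 2) ℂ := !![(c₂ : ℂ), (starRingEnd ℂ) (c₁ : ℂ)]
    ((xS * xSᴴ).det * (xT * xTᴴ).det).im = 0 ∧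
      1 ≤ ((xS * xSᴴ).det * (xT * xTᴴ).det).re :=
  alamouti_parallel_NVD_general c₁ c₂ h₁
end

section
/- The Jafarkhani quasi-orthogonal code is not fully diverse: there exist complex numbers c₁, c₂, c₃, c₄, not all zero, such that the 4×4 matrix X = [[X₁, -X₂*],[X₂, X₁*]] built from Alamouti blocks X₁ = X₁(c₁,c₂) and X₂ = X₂(c₃,c₄) has det(Xᴴ X) = 0. -/
/-! For codewords `(a, b, -b, a)` the first and last rows of `X` both equal `(a, -b̄, b̄, a)`,
so `X` is singular, and hence so is `Xᴴ * X`. -/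

open Complex Matrix

def alamouti (a b : ℂ) : Matrix (Fin 2) (Fin 2) ℂ :=
  !![a, -(starRingEnd ℂ) b; b, (starRingEnd ℂ) a]

def jafarkhani (c₁ c₂ c₃ c₄ : ℂ) : Matrix (Fin 2 ⊕ Fin 2) (Fin 2 ⊕ Fin 2) ℂ :=
  fromBlocks (alamouti c₁ c₂) (-((alamouti c₃ c₄).map (starRingEnd ℂ)))
    (alamouti c₃ c₄) ((alamouti c₁ c₂).map (starRingEnd ℂ))

theorem jafarkhani_row_inl_zero_eq_row_inr_one (a b : ℂ) :
    jafarkhani a b (-b) a (.inl 0) = jafarkhani a b (-b) a (.inr 1) := by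
  funext j
  rcases j with j | j <;> fin_cases j <;> simp [jafarkhani, alamouti]

theorem det_jafarkhani_eq_zero (a b : ℂ) : (jafarkhani a b (-b) a).det = 0 :=
  det_zero_of_row_eq Sum.inl_ne_inr (jafarkhani_row_inl_zero_eq_row_inr_one a b)

theorem jafarkhani_not_fully_diverse :
    ∃ c₁ c₂ c₃ c₄ : ℂ, ¬(c₁ = 0 ∧ c₂ = 0 ∧ c₃ = 0 ∧ c₄ = 0) ∧
      (let X₁ : Matrix (Fin 2) (Fin 2) ℂ :=
        !![c₁, -(starRingEnd ℂ) c₂; c₂, (starRingEnd ℂ) c₁]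
      let X₂ : Matrix (Fin 2) (Fin 2) ℂ :=
        !![c₃, -(starRingEnd ℂ) c₄; c₄, (starRingEnd ℂ) c₃]
      let X : Matrix (Fin 2 ⊕ Fin 2) (Fin 2 ⊕ Fin 2) ℂ :=
        Matrix.fromBlocks X₁ (-(X₂.map (starRingEnd ℂ))) X₂ (X₁.map (starRingEnd ℂ))
      (Xᴴ * X).det = 0) := by
  refine ⟨1, 0, -0, 1, by simp, ?_⟩
  show ((jafarkhani 1 0 (-0) 1)ᴴ * jafarkhani 1 0 (-0) 1).det = 0
  rw [det_mul, det_jafarkhani_eq_zero, mul_zero]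
end

section
/- For the 3×2 matrix X with rows (a, b), (a, -conj(b)), (b, conj(a)) where a, b ∈ ℤ[i] are both nonzero, one has det(Xᴴ X) ≥ 2. -/
/-!
The Gram matrix `XᴴX` has diagonal `2|a|² + |b|²`, `|a|² + 2|b|²` and off-diagonal entry `ā b`,
so `det (XᴴX) = (2|a|² + |b|²)(|a|² + 2|b|²) - |a|²|b|² = 2 (|a|² + |b|²)²` is real for all complex
`a, b`. A nonzero Gaussian integer has `|a|² ≥ 1`, which gives the bound.
-/

open Complex Matrix
open scoped ComplexConjugate

theorem GaussianInt.one_le_normSq {x : GaussianInt} (hx : x ≠ 0) : 1 ≤ normSq (x : ℂ) := by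
  rw [← GaussianInt.intCast_real_norm]
  exact_mod_cast GaussianInt.norm_pos.mpr hx

def satelliteAlamouti (a b : ℂ) : Matrix (Fin 3) (Fin 2) ℂ :=
  !![a, b; a, -conj b; b, conj a]

theorem satelliteAlamouti_conjTranspose_mul_self (a b : ℂ) :
    (satelliteAlamouti a b)ᴴ * satelliteAlamouti a b =
      !![((2 * normSq a + normSq b : ℝ) : ℂ), conj a * b;
         conj b * a, ((normSq a + 2 * normSq b : ℝ) : ℂ)] := by
  ext i j
  fin_cases i <;> fin_cases j <;>
    simp only [satelliteAlamouti, Matrix.mul_apply, conjTranspose_apply, of_apply, cons_val',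
      cons_val_zero, cons_val_one, cons_val, cons_val_fin_one, Fin.sum_univ_three, Fin.isValue,
      Fin.zero_eta, Fin.mk_one, RCLike.star_def, Complex.conj_conj, map_neg, ofReal_add, ofReal_mul,
      ofReal_ofNat, normSq_eq_conj_mul_self] <;> ring

theorem det_satelliteAlamouti_conjTranspose_mul_self (a b : ℂ) :
    ((satelliteAlamouti a b)ᴴ * satelliteAlamouti a b).det =
      ((2 * (normSq a + normSq b) ^ 2 : ℝ) : ℂ) := by
  have hcross : conj a * b * (conj b * a) = ((normSq a * normSq b : ℝ) : ℂ) := by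
    rw [ofReal_mul, normSq_eq_conj_mul_self, normSq_eq_conj_mul_self]; ring
  rw [satelliteAlamouti_conjTranspose_mul_self, det_fin_two_of, hcross]
  push_cast
  ring

theorem qam_alamouti_joint_NVD_general (a b : GaussianInt) (ha : a ≠ 0) :
    let X : Matrix (Fin 3) (Fin 2) ℂ :=
      !![(a : ℂ), (b : ℂ);
         (a : ℂ), -(starRingEnd ℂ) (b : ℂ);
         (b : ℂ), (starRingEnd ℂ) (a : ℂ)]
    ((Xᴴ * X).det).im = 0 ∧ 2 ≤ ((Xᴴ * X).det).re := by
  intro X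
  have hdet : (Xᴴ * X).det = ((2 * (normSq a + normSq b) ^ 2 : ℝ) : ℂ) :=
    det_satelliteAlamouti_conjTranspose_mul_self a b
  have hnorm : 1 ≤ normSq (a : ℂ) + normSq (b : ℂ) := by
    linarith [GaussianInt.one_le_normSq ha, normSq_nonneg (b : ℂ)]
  rw [hdet, ofReal_im, ofReal_re]
  exact ⟨rfl, by nlinarith⟩

theorem qam_alamouti_joint_NVD (a b : GaussianInt) (ha : a ≠ 0) (hb : b ≠ 0) :
    let X : Matrix (Fin 3) (Fin 2) ℂ :=
      !![(a : ℂ), (b : ℂ);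
         (a : ℂ), -(starRingEnd ℂ) (b : ℂ);
         (b : ℂ), (starRingEnd ℂ) (a : ℂ)]
    ((Xᴴ * X).det).im = 0 ∧ 2 ≤ ((Xᴴ * X).det).re :=
  qam_alamouti_joint_NVD_general a b ha
end

section
/- With the setup of the L₃ code (a ∈ ℤ[ζ₈], b ∈ ℤ[i], σ: ζ₈ ↦ -ζ₈), if (a, b) ≠ (0, 0), then det(X_{L₃}ᴴ X_{L₃}) ≥ 1; i.e., the L₃ code has non-vanishing determinant. -/
/-!
All five terms of the Gram determinant
`|a|²|b|² + |a|²|σa|² + 3|b|²|σa|² + |σa|⁴ + 2|b|⁴` are nonnegative. If `b ≠ 0` then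
`|b|² ≥ 1` because `b` is a Gaussian integer. If `b = 0` then `a ≠ 0`; since `ζ₈² = i`, we
have `a = p + ζ₈ q` and `σ a = p - ζ₈ q` with `p, q ∈ ℤ[i]`, so `|a|²|σa|² = |N(a)|²` where
`N(a) = p² - i q²` is a Gaussian integer. It is nonzero because `ζ₈ = (1 + i)/√2 ∉ ℚ(i)` forces
`σ a ≠ 0`, hence `|N(a)|² ≥ 1`.
-/

open Complex Matrix Real

local notation "ζ₈" => Complex.exp (2 * Real.pi * Complex.I / 8)
local notation "ℤ[i]" => GaussianInt

lemma exp_two_pi_I_div_eight : ζ₈ = (1 + I) / √2 := by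
  rw [show 2 * (π : ℂ) * I / 8 = (π / 4 : ℝ) * I by push_cast; ring, exp_mul_I,
    ← ofReal_cos, ← ofReal_sin, cos_pi_div_four, sin_pi_div_four]
  have h2 : (√2 : ℂ) ^ 2 = 2 := by exact_mod_cast sq_sqrt zero_le_two
  have h0 : (√2 : ℂ) ≠ 0 := by exact_mod_cast (sqrt_pos.2 two_pos).ne'
  field_simp
  push_cast
  linear_combination (1 + I) / 2 * h2

lemma exp_two_pi_I_div_eight_sq : ζ₈ ^ 2 = I := by
  have h2 : (√2 : ℂ) ^ 2 = 2 := by exact_mod_cast sq_sqrt zero_le_two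
  rw [exp_two_pi_I_div_eight, div_pow, h2]
  linear_combination (1/2 : ℂ) * I_sq

lemma Int.eq_zero_of_sqrt_two_mul_eq {m n : ℤ} (h : √2 * m = n) : m = 0 := by
  by_contra hm
  exact (irrational_sqrt_two.mul_intCast hm).ne_int n h

namespace GaussianInt

lemma one_le_normSq_s12 {z : ℤ[i]} (hz : z ≠ 0) : 1 ≤ normSq (z : ℂ) := by
  rw [← intCast_real_norm]
  exact_mod_cast norm_pos.2 hz

lemma eq_zero_of_toComplex_eq_zeta8_mul {p q : ℤ[i]} (h : (p : ℂ) = ζ₈ * q) :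
    p = 0 ∧ q = 0 := by
  have h' : (√2 : ℂ) * p = (1 + I) * q := by
    have h0 : (√2 : ℂ) ≠ 0 := by exact_mod_cast (sqrt_pos.2 two_pos).ne'
    rw [h, exp_two_pi_I_div_eight]
    field_simp
  have hre := congrArg re h'
  have him := congrArg im h'
  simp only [toComplex_def₂, mul_re, mul_im, add_re, add_im, ofReal_re, ofReal_im, one_re, one_im,
    I_re, I_im] at hre him
  have hpre := Int.eq_zero_of_sqrt_two_mul_eq (m := p.re) (n := q.re - q.im) (by push_cast; linarith)
  have hpim := Int.eq_zero_of_sqrt_two_mul_eq (m := p.im) (n := q.re + q.im) (by push_cast; linarith)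
  rw [hpre, Int.cast_zero] at hre
  rw [hpim, Int.cast_zero] at him
  have hqre : q.re = 0 := by exact_mod_cast (by linarith : (q.re : ℝ) = 0)
  have hqim : q.im = 0 := by exact_mod_cast (by linarith : (q.im : ℝ) = 0)
  exact ⟨Zsqrtd.ext hpre hpim, Zsqrtd.ext hqre hqim⟩

lemma toComplex_add_zeta8_mul_sub (p q : ℤ[i]) :
    ((p : ℂ) + ζ₈ * q) * (p - ζ₈ * q) = ((p ^ 2 - ⟨0, 1⟩ * q ^ 2 : ℤ[i]) : ℂ) := by
  simp only [map_sub, map_mul, map_pow, toComplex_def']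
  linear_combination (-(q : ℂ) ^ 2) * exp_two_pi_I_div_eight_sq

lemma one_le_normSq_add_zeta8_mul_mul_sub {p q : ℤ[i]} (h : (p : ℂ) + ζ₈ * q ≠ 0) :
    1 ≤ normSq ((p : ℂ) + ζ₈ * q) * normSq ((p : ℂ) - ζ₈ * q) := by
  have hsub : (p : ℂ) - ζ₈ * q ≠ 0 := by
    intro h0
    obtain ⟨rfl, rfl⟩ := eq_zero_of_toComplex_eq_zeta8_mul (sub_eq_zero.1 h0)
    simp at h
  rw [← normSq_mul, toComplex_add_zeta8_mul_sub]
  refine one_le_normSq_s12 fun h0 => ?_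
  have := toComplex_add_zeta8_mul_sub p q
  rw [h0, toComplex_zero] at this
  exact mul_ne_zero h hsub this

end GaussianInt

lemma det_conjTranspose_mul_L3 (A S B : ℂ) :
    ((!![A, B; S, -(starRingEnd ℂ) B; B, (starRingEnd ℂ) S]ᴴ *
      !![A, B; S, -(starRingEnd ℂ) B; B, (starRingEnd ℂ) S]).det) =
    ((normSq A * normSq B + normSq A * normSq S + 3 * normSq B * normSq S
      + normSq S ^ 2 + 2 * normSq B ^ 2 : ℝ) : ℂ) := by
  rw [Complex.ext_iff, ofReal_re, ofReal_im]
  constructor <;>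
  simp [Matrix.det_fin_two, Matrix.mul_apply, Fin.sum_univ_three, normSq_apply] <;> ring

theorem L3_joint_NVD (k₀ k₁ k₂ k₃ : ℤ) (b : GaussianInt)
    (h : ¬((k₀ : ℂ) + k₁ * Complex.exp (2 * Real.pi * Complex.I / 8)
        + k₂ * Complex.exp (2 * Real.pi * Complex.I / 8)^2
        + k₃ * Complex.exp (2 * Real.pi * Complex.I / 8)^3 = 0 ∧ b = 0)) :
    let ζ : ℂ := Complex.exp (2 * Real.pi * Complex.I / 8)
    let a : ℂ := k₀ + k₁ * ζ + k₂ * ζ^2 + k₃ * ζ^3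
    let sa : ℂ := k₀ - k₁ * ζ + k₂ * ζ^2 - k₃ * ζ^3
    let X : Matrix (Fin 3) (Fin 2) ℂ :=
      !![a, (b : ℂ);
         sa, -(starRingEnd ℂ) (b : ℂ);
         (b : ℂ), (starRingEnd ℂ) sa]
    ((Xᴴ * X).det).im = 0 ∧ 1 ≤ ((Xᴴ * X).det).re := by
  intro ζ a sa X
  set p : ℤ[i] := ⟨k₀, k₂⟩
  set q : ℤ[i] := ⟨k₁, k₃⟩
  have hζ : ζ ^ 2 = I := exp_two_pi_I_div_eight_sq
  have ha : a = p + ζ * q := by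
    simp only [p, q, GaussianInt.toComplex_def']
    linear_combination (k₂ + k₃ * ζ : ℂ) * hζ
  have hsa : sa = p - ζ * q := by
    simp only [p, q, GaussianInt.toComplex_def']
    linear_combination (k₂ - k₃ * ζ : ℂ) * hζ
  rw [det_conjTranspose_mul_L3, ofReal_im, ofReal_re]
  refine ⟨rfl, ?_⟩
  rcases eq_or_ne b 0 with rfl | hb
  · have hN : 1 ≤ normSq a * normSq sa := by
      rw [ha, hsa]
      exact GaussianInt.one_le_normSq_add_zeta8_mul_mul_sub (ha ▸ fun h0 => h ⟨h0, rfl⟩)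
    simp only [map_zero]
    nlinarith [sq_nonneg (normSq sa)]
  · have hB := GaussianInt.one_le_normSq_s12 hb
    nlinarith [normSq_nonneg a, normSq_nonneg sa, mul_nonneg (normSq_nonneg a) (normSq_nonneg sa)]
end

section
/- With the setup of the L₃ code, if a ≠ 0 and b ≠ 0 then det(X_{L₃}ᴴ X_{L₃}) ≥ 3. -/
/-!
Writing `A = |a|²`, `S = |σ(a)|²`, `B = |b|²`, the Gram matrix `Xᴴ X` has diagonal
`A + S + B`, `2B + S` and off-diagonal entry `conj a * b`, so its determinant is the real number
`AB + AS + 3SB + S² + 2B²`. Now `B ≥ 1` because `b` is a nonzero Gaussian integer, and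
`AS = |a σ(a)|² ≥ 1` because `a σ(a)` is a Gaussian integer (`ζ₈² = i`), nonzero since `σ(a) ≠ 0`
by the irrationality of `√2`. Hence the determinant is at least `AS + 2B² ≥ 3`.
-/

open Complex Matrix ComplexConjugate

theorem det_conjTranspose_mul_L3_s13 (a s b : ℂ) :
    let X : Matrix (Fin 3) (Fin 2) ℂ := !![a, b; s, -conj b; b, conj s]
    (Xᴴ * X).det =
      (((normSq a + normSq s + normSq b) * (2 * normSq b + normSq s) - normSq a * normSq b : ℝ) :
        ℂ) := by
  intro X
  simp only [X, det_fin_two, mul_apply, conjTranspose_apply, Fin.sum_univ_three, of_apply,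
    cons_val', cons_val_zero, cons_val_one, cons_val, cons_val_fin_one, RCLike.star_def, map_neg,
    RingHomCompTriple.comp_apply, RingHom.id_apply, mul_neg, neg_mul, neg_neg, ofReal_sub,
    ofReal_mul, ofReal_add, ofReal_ofNat]
  rw [normSq_eq_conj_mul_self (z := a), normSq_eq_conj_mul_self (z := s),
    normSq_eq_conj_mul_self (z := b)]
  ring

theorem three_le_of_one_le_mul_of_one_le {A S B : ℝ} (hA : 0 ≤ A) (hS : 0 ≤ S)
    (hAS : 1 ≤ A * S) (hB : 1 ≤ B) : 3 ≤ (A + S + B) * (2 * B + S) - A * B := by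
  nlinarith [mul_nonneg hA (zero_le_one.trans hB), mul_nonneg hS (zero_le_one.trans hB),
    sq_nonneg S]

theorem GaussianInt.one_le_normSq_s13 {z : GaussianInt} (hz : z ≠ 0) : 1 ≤ normSq (z : ℂ) := by
  rw [← GaussianInt.intCast_real_norm]
  exact_mod_cast GaussianInt.norm_pos.2 hz

theorem Int.eq_zero_of_add_sqrt_two_mul_eq_zero {p q : ℤ} (h : (p : ℝ) + √2 * q = 0) :
    p = 0 ∧ q = 0 := by
  have hq : q = 0 := by
    by_contra hq
    exact ((irrational_sqrt_two.mul_intCast hq).intCast_add p).ne_zero h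
  subst hq
  simpa using h

theorem GaussianInt.eq_zero_of_add_sqrt_two_mul_eq_zero {u v : GaussianInt}
    (h : (u : ℂ) + √2 * v = 0) : u = 0 ∧ v = 0 := by
  obtain ⟨hu_re, hv_re⟩ := Int.eq_zero_of_add_sqrt_two_mul_eq_zero (p := u.re) (q := v.re) <| by
    simpa [GaussianInt.intCast_re] using congrArg re h
  obtain ⟨hu_im, hv_im⟩ := Int.eq_zero_of_add_sqrt_two_mul_eq_zero (p := u.im) (q := v.im) <| by
    simpa [GaussianInt.intCast_im] using congrArg im h
  exact ⟨Zsqrtd.ext hu_re hu_im, Zsqrtd.ext hv_re hv_im⟩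

theorem exp_two_pi_mul_I_div_eight : exp (2 * Real.pi * I / 8) = (√2 / 2 : ℝ) * (1 + I) := by
  rw [show 2 * (Real.pi : ℂ) * I / 8 = (Real.pi / 4 : ℝ) * I by push_cast; ring, exp_mul_I,
    ← ofReal_cos, ← ofReal_sin, Real.cos_pi_div_four, Real.sin_pi_div_four]
  ring

theorem sq_eq_I_of_eq_sqrt_two_div_two_mul {ζ : ℂ} (hζ : ζ = (√2 / 2 : ℝ) * (1 + I)) :
    ζ ^ 2 = I := by
  have hsqrt : (√2 : ℂ) ^ 2 = 2 := by norm_cast; exact Real.sq_sqrt zero_le_two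
  rw [hζ]
  push_cast
  linear_combination (I / 2) * hsqrt + (√2 : ℂ) ^ 2 / 4 * I_sq

theorem mul_sigma_eq_gaussianInt {ζ : ℂ} (hζ : ζ ^ 2 = I) (k₀ k₁ k₂ k₃ : ℤ) :
    (k₀ + k₁ * ζ + k₂ * ζ ^ 2 + k₃ * ζ ^ 3) * (k₀ - k₁ * ζ + k₂ * ζ ^ 2 - k₃ * ζ ^ 3) =
      ((⟨k₀ ^ 2 - k₂ ^ 2 + 2 * k₁ * k₃, 2 * k₀ * k₂ - k₁ ^ 2 + k₃ ^ 2⟩ : GaussianInt) : ℂ) := by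
  calc _ = ((k₀ : ℂ) + k₂ * ζ ^ 2) ^ 2 - ζ ^ 2 * (k₁ + k₃ * ζ ^ 2) ^ 2 := by ring
    _ = _ := by
      rw [hζ, GaussianInt.toComplex_def']
      push_cast
      linear_combination (k₂ ^ 2 - 2 * k₁ * k₃ - k₃ ^ 2 * I : ℂ) * I_sq

theorem sigma_ne_zero_of_ne_zero {ζ : ℂ} (hζ : ζ = (√2 / 2 : ℝ) * (1 + I))
    {k₀ k₁ k₂ k₃ : ℤ} (ha : (k₀ : ℂ) + k₁ * ζ + k₂ * ζ ^ 2 + k₃ * ζ ^ 3 ≠ 0) :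
    (k₀ : ℂ) - k₁ * ζ + k₂ * ζ ^ 2 - k₃ * ζ ^ 3 ≠ 0 := by
  intro hs
  have hζ2 : ζ ^ 2 = I := sq_eq_I_of_eq_sqrt_two_div_two_mul hζ
  have h2ζ : 2 * ζ = √2 * (1 + I) := by rw [hζ]; push_cast; ring
  have h2s : ((⟨2 * k₀, 2 * k₂⟩ : GaussianInt) : ℂ)
      + √2 * ((⟨k₃ - k₁, -(k₁ + k₃)⟩ : GaussianInt) : ℂ) = 0 := by
    rw [GaussianInt.toComplex_def', GaussianInt.toComplex_def']
    push_cast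
    linear_combination 2 * hs - 2 * (k₂ : ℂ) * hζ2 + (k₁ : ℂ) * h2ζ
      + (k₃ : ℂ) * (I * h2ζ + 2 * ζ * hζ2 + √2 * I_sq)
  obtain ⟨hu, hv⟩ := GaussianInt.eq_zero_of_add_sqrt_two_mul_eq_zero h2s
  simp only [Zsqrtd.ext_iff] at hu hv
  obtain ⟨rfl, rfl, rfl, rfl⟩ : k₀ = 0 ∧ k₁ = 0 ∧ k₂ = 0 ∧ k₃ = 0 := by simp at hu hv; omega
  simp at ha

theorem L3_joint_det_ge_three (k₀ k₁ k₂ k₃ : ℤ) (b : GaussianInt)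
    (ha : (k₀ : ℂ) + k₁ * Complex.exp (2 * Real.pi * Complex.I / 8)
        + k₂ * Complex.exp (2 * Real.pi * Complex.I / 8)^2
        + k₃ * Complex.exp (2 * Real.pi * Complex.I / 8)^3 ≠ 0)
    (hb : b ≠ 0) :
    let ζ : ℂ := Complex.exp (2 * Real.pi * Complex.I / 8)
    let a : ℂ := k₀ + k₁ * ζ + k₂ * ζ^2 + k₃ * ζ^3
    let sa : ℂ := k₀ - k₁ * ζ + k₂ * ζ^2 - k₃ * ζ^3
    let X : Matrix (Fin 3) (Fin 2) ℂ :=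
      !![a, (b : ℂ);
         sa, -(starRingEnd ℂ) (b : ℂ);
         (b : ℂ), (starRingEnd ℂ) sa]
    ((Xᴴ * X).det).im = 0 ∧ 3 ≤ ((Xᴴ * X).det).re := by
  intro ζ a sa X
  have hζ : ζ = (√2 / 2 : ℝ) * (1 + I) := exp_two_pi_mul_I_div_eight
  have hsa : sa ≠ 0 := sigma_ne_zero_of_ne_zero hζ ha
  obtain ⟨g, hg⟩ : ∃ g : GaussianInt, a * sa = g :=
    ⟨_, mul_sigma_eq_gaussianInt (sq_eq_I_of_eq_sqrt_two_div_two_mul hζ) ..⟩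
  have hg0 : g ≠ 0 := by
    rintro rfl
    exact mul_ne_zero ha hsa (by simpa using hg)
  have hAS : 1 ≤ normSq a * normSq sa := by
    rw [← normSq_mul, hg]
    exact GaussianInt.one_le_normSq_s13 hg0
  rw [det_conjTranspose_mul_L3_s13 a sa b, ofReal_im, ofReal_re]
  exact ⟨rfl, three_le_of_one_le_mul_of_one_le (normSq_nonneg _) (normSq_nonneg _) hAS
    (GaussianInt.one_le_normSq_s13 hb)⟩
end

section
/- The modified double-Alamouti 4×2 code with rows (a, -conj(b)), (c, -conj(d)), (b, conj(a)), (d, conj(c)), with a, b, c, d ∈ ℤ[i] not all zero, satisfies det(Xᴴ X) ≥ 1 (joint NVD), but there exist nonzero choices of (a,b,c,d) for which det(X_S X_Sᴴ)·det(X_T X_Tᴴ) = 0, where X_S consists of the first two rows and X_T of the last two (no parallel NVD). -/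
open Complex Matrix
open scoped ComplexConjugate

/-!
Rows 1, 3 and rows 2, 4 of `X` are the Alamouti blocks of `(a, b)` and of `(c, d)`, so the two
columns of `X` are orthogonal of equal squared length `N = |a|² + |b|² + |c|² + |d|²`. Hence
`Xᴴ X = N • 1` and `det (Xᴴ X) = N²`, and `N` is a positive integer for nonzero Gaussian
integers. The blocks `X_S`, `X_T` mix the two Alamouti blocks and are singular already for
`(a, b, c, d) = (1, 0, 0, 0)`.
-/

def doubleAlamouti (a b c d : ℂ) : Matrix (Fin 4) (Fin 2) ℂ :=
  !![a, -conj b; c, -conj d; b, conj a; d, conj c]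

theorem conjTranspose_mul_self_doubleAlamouti (a b c d : ℂ) :
    (doubleAlamouti a b c d)ᴴ * doubleAlamouti a b c d =
      ((normSq a + normSq b + normSq c + normSq d : ℝ) : ℂ) • 1 := by
  ext i j
  fin_cases i <;> fin_cases j <;>
    simp [doubleAlamouti, mul_apply, Fin.sum_univ_four, ← normSq_eq_conj_mul_self] <;> ring

theorem det_conjTranspose_mul_self_doubleAlamouti (a b c d : ℂ) :
    ((doubleAlamouti a b c d)ᴴ * doubleAlamouti a b c d).det =
      (((normSq a + normSq b + normSq c + normSq d) ^ 2 : ℝ) : ℂ) := by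
  rw [conjTranspose_mul_self_doubleAlamouti, det_smul, det_one, Fintype.card_fin]
  push_cast
  ring

theorem GaussianInt.one_le_normSq_add_of_ne_zero {a b c d : GaussianInt}
    (h : ¬(a = 0 ∧ b = 0 ∧ c = 0 ∧ d = 0)) :
    1 ≤ normSq (a : ℂ) + normSq (b : ℂ) + normSq (c : ℂ) + normSq (d : ℂ) := by
  simp only [← GaussianInt.intCast_real_norm]
  have := a.norm_nonneg; have := b.norm_nonneg; have := c.norm_nonneg; have := d.norm_nonneg
  have hpos : 1 ≤ a.norm + b.norm + c.norm + d.norm := by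
    by_contra! hlt
    simp only [← GaussianInt.norm_eq_zero] at h
    omega
  exact_mod_cast hpos

theorem modified_double_alamouti_joint_not_parallel_NVD :
    (∀ a b c d : GaussianInt, ¬(a = 0 ∧ b = 0 ∧ c = 0 ∧ d = 0) →
      let X : Matrix (Fin 4) (Fin 2) ℂ :=
        !![(a : ℂ), -(starRingEnd ℂ) (b : ℂ);
           (c : ℂ), -(starRingEnd ℂ) (d : ℂ);
           (b : ℂ), (starRingEnd ℂ) (a : ℂ);
           (d : ℂ), (starRingEnd ℂ) (c : ℂ)]
      ((Xᴴ * X).det).im = 0 ∧ 1 ≤ ((Xᴴ * X).det).re) ∧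
    (∃ a b c d : GaussianInt, ¬(a = 0 ∧ b = 0 ∧ c = 0 ∧ d = 0) ∧
      let XS : Matrix (Fin 2) (Fin 2) ℂ :=
        !![(a : ℂ), -(starRingEnd ℂ) (b : ℂ);
           (c : ℂ), -(starRingEnd ℂ) (d : ℂ)]
      let XT : Matrix (Fin 2) (Fin 2) ℂ :=
        !![(b : ℂ), (starRingEnd ℂ) (a : ℂ);
           (d : ℂ), (starRingEnd ℂ) (c : ℂ)]
      (XS * XSᴴ).det * (XT * XTᴴ).det = 0) := by
  refine ⟨fun a b c d hne => ?_, 1, 0, 0, 0, by simp, ?_⟩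
  · change ((doubleAlamouti a b c d)ᴴ * doubleAlamouti a b c d).det.im = 0 ∧
      1 ≤ ((doubleAlamouti a b c d)ᴴ * doubleAlamouti a b c d).det.re
    rw [det_conjTranspose_mul_self_doubleAlamouti, ofReal_im, ofReal_re]
    exact ⟨rfl, one_le_pow₀ (GaussianInt.one_le_normSq_add_of_ne_zero hne)⟩
  · intro XS XT
    have hXS : XS.det = 0 := by simp [XS, det_fin_two]
    rw [det_mul, hXS, zero_mul, zero_mul]
end
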